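/- Fix θ, ξ ∈ ℝ and let C_{θ,ξ} be the conjugation on ℓ²(ℕ, ℂ) defined coefficientwise by (C_{θ,ξ} a)_n = e^{iξ} e^{−inθ} conj(a_n) (corresponding to (C_{θ,ξ} f)(z) = e^{iξ} conj(f(e^{iθ} z̄)) on H²(𝔻)). Let T be a Toeplitz operator on ℓ²(ℕ, ℂ) with symbol coefficients φ_k (k ∈ ℤ). Then T is C_{θ,ξ}-symmetric (C_{θ,ξ} T* C_{θ,ξ} = T) if and only if e^{inθ} φ_n = φ_{−n} for all n ∈ ℤ. -/

import Mathlib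

noncomputable section
open scoped ComplexConjugate
open ContinuousLinearMap

/-- A conjugation on a complex Hilbert space: an antilinear, involutive, isometric map. -/
def IsConjugation {E : Type*} [NormedAddCommGroup E] [InnerProductSpace ℂ E] (C : E → E) : Prop :=
  (∀ (a : ℂ) (f g : E), C (a • f + g) = conj a • C f + C g) ∧
  (∀ f, C (C f) = f) ∧
  (∀ f, ‖C f‖ = ‖f‖)

/-- The inner product in the paper's convention: linear in the first argument and
conjugate-linear in the second (Mathlib's `inner` with the arguments swapped). -/
def ip {E : Type*} [NormedAddCommGroup E] [InnerProductSpace ℂ E] (x y : E) : ℂ :=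
  inner ℂ y x

/-- `ℓ²(ℕ, ℂ)`, identified with the Hardy space `H²(𝔻)` via Taylor coefficients. -/
abbrev Ell2 : Type := lp (fun _ : ℕ => ℂ) 2

/-- The standard orthonormal basis of `ℓ²(ℕ, ℂ)`. -/
def e (n : ℕ) : Ell2 := lp.single 2 n 1

/-!
`C T* C` is bounded and linear (the two antilinear factors cancel), so it equals `T` iff
the matrix entries agree. Since `C` conjugates the `n`-th coefficient and multiplies it by
`c n = e^{iξ} e^{-inθ}`, we have `C e_n = c n • e_n`, and the `(m, n)` entry of `C T* C` is
`c m * conj (c n) * ⟨T e_m, e_n⟩ = e^{i(n-m)θ} φ (n - m)`, while that of `T` is `φ (m - n)`.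
As `n - m` ranges over all of `ℤ`, this is the stated symbol condition.
-/

namespace IsConjugation

variable {E : Type*} [NormedAddCommGroup E] [InnerProductSpace ℂ E] {C : E → E}

theorem map_add (hC : IsConjugation C) (f g : E) : C (f + g) = C f + C g := by
  simpa using hC.1 1 f g

theorem map_zero (hC : IsConjugation C) : C 0 = 0 := by
  simpa using hC.map_add 0 0

theorem map_smul (hC : IsConjugation C) (a : ℂ) (f : E) : C (a • f) = conj a • C f := by
  simpa [hC.map_zero] using hC.1 a f 0

theorem isometry (hC : IsConjugation C) : Isometry C :=
  AddMonoidHomClass.isometry_of_norm (AddMonoidHom.mk' C hC.map_add) hC.2.2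

def toCLM (hC : IsConjugation C) : E →L⋆[ℂ] E where
  toFun := C
  map_add' := hC.map_add
  map_smul' := hC.map_smul
  cont := hC.isometry.continuous

variable [CompleteSpace E]

def conjAdjoint (hC : IsConjugation C) (T : E →L[ℂ] E) : E →L[ℂ] E :=
  hC.toCLM.comp ((adjoint T).comp hC.toCLM)

theorem conjAdjoint_apply (hC : IsConjugation C) (T : E →L[ℂ] E) (x : E) :
    hC.conjAdjoint T x = C (adjoint T (C x)) :=
  rfl

end IsConjugation

theorem inner_e_left (x : Ell2) (m : ℕ) : inner ℂ (e m) x = x m := by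
  simp [e, lp.inner_single_left]

theorem e_apply (n m : ℕ) : e n m = if m = n then 1 else 0 := by
  classical
  simp [e, lp.single_apply, Pi.single_apply]

theorem ext_e_iff {A B : Ell2 →L[ℂ] Ell2} : A = B ↔ ∀ m n, A (e n) m = B (e n) m := by
  refine ⟨fun h _ _ => h ▸ rfl, fun h => ?_⟩
  refine lp.ext_continuousLinearMap ENNReal.ofNat_ne_top fun n => ?_
  exact ContinuousLinearMap.ext_ring (lp.ext (funext fun m => h m n))

theorem adjoint_e_apply (T : Ell2 →L[ℂ] Ell2) (m n : ℕ) :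
    adjoint T (e n) m = conj (T (e m) n) := by
  rw [← inner_e_left, adjoint_inner_right, ← inner_conj_symm, inner_e_left]

section Diagonal

variable {C : Ell2 → Ell2} {c : ℕ → ℂ}

theorem apply_e_eq_smul (hC : ∀ a n, C a n = c n * conj (a n)) (n : ℕ) :
    C (e n) = c n • e n := by
  ext m
  rw [hC, lp.coeFn_smul, Pi.smul_apply, e_apply]
  split_ifs with h <;> simp [h]

theorem apply_adjoint_apply_e_apply (hC : ∀ a n, C a n = c n * conj (a n))
    (T : Ell2 →L[ℂ] Ell2) (m n : ℕ) :
    C (adjoint T (C (e n))) m = c m * conj (c n) * T (e m) n := by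
  rw [hC, apply_e_eq_smul hC, map_smul, lp.coeFn_smul, Pi.smul_apply, smul_eq_mul,
    adjoint_e_apply]
  simp only [map_mul, Complex.conj_conj]
  ring

end Diagonal

theorem exp_mul_exp_mul_conj (θ ξ : ℝ) (m n : ℕ) :
    Complex.exp (ξ * Complex.I) * Complex.exp (-(m * θ) * Complex.I) *
        conj (Complex.exp (ξ * Complex.I) * Complex.exp (-(n * θ) * Complex.I)) =
      Complex.exp (((n - m : ℤ) : ℂ) * θ * Complex.I) := by
  rw [map_mul, ← Complex.exp_conj, ← Complex.exp_conj, mul_mul_mul_comm, ← Complex.exp_add,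
    ← Complex.exp_add, ← Complex.exp_add]
  congr 1
  simp only [map_mul, map_neg, Complex.conj_ofReal, Complex.conj_I, map_natCast]
  push_cast
  ring

theorem forall_natCast_sub_iff {P : ℤ → Prop} : (∀ m n : ℕ, P (n - m)) ↔ ∀ k, P k := by
  refine ⟨fun h k => ?_, fun h _ _ => h _⟩
  obtain ⟨j, rfl | rfl⟩ := Int.eq_nat_or_neg k
  · simpa using h 0 j
  · simpa using h j 0

theorem c_theta_xi_symmetric_iff
    (θ ξ : ℝ) (C : Ell2 → Ell2) (hC : IsConjugation C)
    (hCdef : ∀ (a : Ell2) (n : ℕ),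
      C a n = Complex.exp ((ξ : ℂ) * Complex.I) *
        Complex.exp (-((n : ℂ) * (θ : ℂ)) * Complex.I) * conj (a n))
    (T : Ell2 →L[ℂ] Ell2)
    (φ : ℤ → ℂ) (hφ : ∀ m n : ℕ, φ ((m : ℤ) - (n : ℤ)) = ip (T (e n)) (e m)) :
    (∀ x, C (adjoint T (C x)) = T x) ↔
      ∀ n : ℤ, Complex.exp ((n : ℂ) * (θ : ℂ) * Complex.I) * φ n = φ (-n) := by
  have hentry : ∀ m n : ℕ, T (e n) m = φ (m - n) := fun m n => by rw [hφ, ip, inner_e_left]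
  calc (∀ x, C (adjoint T (C x)) = T x) ↔ hC.conjAdjoint T = T := by
        simp only [ContinuousLinearMap.ext_iff, hC.conjAdjoint_apply]
    _ ↔ ∀ m n : ℕ, C (adjoint T (C (e n))) m = T (e n) m := ext_e_iff
    _ ↔ ∀ m n : ℕ,
        Complex.exp (((n - m : ℤ) : ℂ) * θ * Complex.I) * φ (n - m) = φ (-(n - m)) := by
      simp only [apply_adjoint_apply_e_apply hCdef, exp_mul_exp_mul_conj, hentry, neg_sub]
    _ ↔ _ := forall_natCast_sub_iff (P := fun k => Complex.exp (k * θ * Complex.I) * φ k = φ (-k))
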